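/- arXiv:2204.14237 — 6 statements merged into one kernel-verified Lean document; each statement's English description precedes it below -/
import Mathlib

section
/- Let X be a Banach space and (T_n) a sequence of compact operators on X converging to the identity in the strong operator topology. Then a bounded set F ⊆ X is precompact (totally bounded) if and only if sup_{f ∈ F} ‖T_n f − f‖ → 0 as n → ∞. -/
open Metric Set Filter

/-- **Mazur's compactness criterion.** Let `X` be a Banach space and `(T n)` a sequence of
compact operators on `X` converging to the identity in the strong operator topology. Then a
bounded set `F ⊆ X` is precompact if and only if `sup_{f ∈ F} ‖T n f − f‖ → 0`. -/
theorem mazur_compactness_criterion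
    {X : Type*} [NormedAddCommGroup X] [NormedSpace ℂ X] [CompleteSpace X]
    (T : ℕ → X →L[ℂ] X) (hT : ∀ n, IsCompactOperator (T n))
    (hSOT : ∀ f : X, Filter.Tendsto (fun n => ‖T n f - f‖) Filter.atTop (nhds 0))
    (F : Set X) (hF : Bornology.IsBounded F) :
    IsCompact (closure F) ↔
      ∀ ε > 0, ∃ N : ℕ, ∀ n ≥ N, ∀ f ∈ F, ‖T n f - f‖ < ε := by
  constructor
  · intro hK ε hε
    -- uniform bound on ‖T n‖ via Banach–Steinhaus
    obtain ⟨C, hC⟩ : ∃ C, ∀ n, ‖T n‖ ≤ C := by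
      have hpt : ∀ x : X, ∃ C, ∀ n, ‖T n x‖ ≤ C := by
        intro x
        have hb : Bornology.IsBounded (Set.range fun n => ‖T n x - x‖) :=
          isBounded_range_of_tendsto _ (hSOT x)
        obtain ⟨C, hC⟩ := hb.exists_norm_le
        refine ⟨C + ‖x‖, fun n => ?_⟩
        have h1 : ‖T n x - x‖ ≤ C := by simpa using hC _ ⟨n, rfl⟩
        calc ‖T n x‖ = ‖(T n x - x) + x‖ := by congr 1; abel
          _ ≤ ‖T n x - x‖ + ‖x‖ := norm_add_le _ _
          _ ≤ C + ‖x‖ := by linarith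
      obtain ⟨C', hC'⟩ := banach_steinhaus hpt
      exact ⟨C', fun n => hC' n⟩
    have hC0 : 0 ≤ C := le_trans (norm_nonneg _) (hC 0)
    set δ : ℝ := ε / (2 * (C + 2)) with hδdef
    have hδpos : 0 < δ := by positivity
    -- finite δ-net of the compact closure
    have hcov : closure F ⊆ ⋃ g ∈ closure F, ball g δ := fun g hg => by
      exact mem_biUnion hg (mem_ball_self hδpos)
    obtain ⟨t, htsub, htfin, htcov⟩ :=
      hK.elim_finite_subcover_image (fun g _ => isOpen_ball) hcov
    -- for each center, a tail index
    have hNg : ∀ g ∈ t, ∃ N : ℕ, ∀ n ≥ N, ‖T n g - g‖ < ε / 2 := by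
      intro g _
      have := (hSOT g).eventually (eventually_lt_nhds (by positivity : (0:ℝ) < ε / 2))
      exact this.exists_forall_of_atTop
    choose! N hN using hNg
    lift t to Finset X using htfin
    refine ⟨t.sup N, fun n hn f hf => ?_⟩
    have hfc : f ∈ closure F := subset_closure hf
    obtain ⟨g, hgt, hfg⟩ : ∃ g ∈ (t : Set X), f ∈ ball g δ := by
      simpa [mem_iUnion] using htcov hfc
    have hgb : ‖T n g - g‖ < ε / 2 :=
      hN g hgt n (le_trans (Finset.le_sup hgt) hn)
    have hfgd : ‖f - g‖ < δ := by rwa [mem_ball, dist_eq_norm] at hfg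
    calc ‖T n f - f‖ = ‖(T n (f - g)) + (T n g - g) + (g - f)‖ := by
          congr 1; rw [map_sub]; abel
      _ ≤ ‖T n (f - g)‖ + ‖T n g - g‖ + ‖g - f‖ := norm_add₃_le
      _ ≤ C * ‖f - g‖ + ‖T n g - g‖ + ‖f - g‖ := by
          rw [norm_sub_rev g f]
          gcongr
          exact le_trans ((T n).le_opNorm _)
            (mul_le_mul_of_nonneg_right (hC n) (norm_nonneg _))
      _ ≤ (C + 1) * δ + ‖T n g - g‖ := by nlinarith [norm_nonneg (f - g)]
      _ < (C + 1) * δ + ε / 2 := by linarith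
      _ ≤ ε / 2 + ε / 2 := by
          have h22 : (0:ℝ) < 2 * (C + 2) := by positivity
          have : (C + 1) * δ ≤ ε / 2 := by
            rw [hδdef, mul_comm, div_mul_eq_mul_div,
              div_le_div_iff₀ h22 two_pos]
            nlinarith
          linarith
      _ = ε := by ring
  · intro h
    refine TotallyBounded.isCompact_of_isClosed ?_ isClosed_closure
    refine TotallyBounded.closure ?_
    rw [Metric.totallyBounded_iff]
    intro ε hε
    obtain ⟨N, hNh⟩ := h (ε / 2) (by positivity)
    have himg : IsCompact (closure ((T N) '' F)) :=
      (hT N).isCompact_closure_image_of_bounded hF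
    obtain ⟨s, hsfin, hscov⟩ :=
      (totallyBounded_iff.mp ((himg.totallyBounded).subset subset_closure)) (ε / 2)
        (by positivity)
    refine ⟨s, hsfin, fun f hf => ?_⟩
    obtain ⟨y, hy, hyd⟩ : ∃ y ∈ s, T N f ∈ ball y (ε / 2) := by
      simpa [mem_iUnion] using hscov ⟨f, hf, rfl⟩
    refine mem_biUnion hy ?_
    rw [mem_ball, dist_eq_norm] at hyd ⊢
    calc ‖f - y‖ = ‖(f - T N f) + (T N f - y)‖ := by rw [sub_add_sub_cancel]
      _ ≤ ‖f - T N f‖ + ‖T N f - y‖ := norm_add_le _ _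
      _ < ε / 2 + ε / 2 := by
          rw [norm_sub_rev]
          exact add_lt_add (hNh N le_rfl f hf) hyd
      _ = ε := by ring
end

section
/- Let H be a Hilbert space and (T_n) a sequence of compact operators on H such that ⟨T_n f − f, f⟩ → 0 for every f ∈ H. Then a bounded set F ⊆ H is precompact if and only if sup_{f ∈ F} |⟨T_n f − f, f⟩| → 0 as n → ∞. -/
/-!
Write `S n = T n - 1` and `q n f = ⟪S n f, f⟫`.

If `closure F` is compact: polarization turns `q n → 0` into `⟪S n x, y⟫ → 0` for all `x, y`, so
two applications of the uniform boundedness principle bound `‖S n‖` uniformly. The forms `q n`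
are then uniformly Lipschitz on bounded sets, and pointwise convergence of an equicontinuous
family is uniform on compact sets.

Conversely, take an ultrafilter `U` on the bounded set `F`. By Banach–Alaoglu and the Riesz
representation it converges weakly to some `x`; each compact `T n` maps it to a norm-convergent
filter, so `⟪T n f, f⟫ → ⟪T n x, x⟫` along `U`. As `⟪T n f, f⟫ → ‖f‖²` uniformly on `F` and
`⟪T n x, x⟫ → ‖x‖²`, the limits can be exchanged: `‖f‖ → ‖x‖` along `U`. Weak convergence
together with convergence of norms is norm convergence, so `U` is Cauchy and `F` is totally
bounded.
-/

open scoped InnerProductSpace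

open Filter Topology Set

theorem EquicontinuousOn.tendstoUniformlyOn_of_tendsto {ι X α : Type*} [TopologicalSpace X]
    [UniformSpace α] {F : ι → X → α} {f : X → α} {K : Set X} {l : Filter ι}
    (hK : IsCompact K) (hF : EquicontinuousOn F K) (h : ∀ x ∈ K, Tendsto (F · x) l (𝓝 (f x))) :
    TendstoUniformlyOn F f l K := by
  have := (EquicontinuousOn.tendsto_uniformOnFun_iff_pi' (𝔖 := {K}) (by simpa using hK)
    (by simpa using hF) l f).2 ?_
  · exact UniformOnFun.tendsto_iff_tendstoUniformlyOn.1 this K rfl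
  · rw [tendsto_pi_nhds]
    rintro ⟨x, hx⟩
    exact h x (by simpa using hx)

section InnerProductSpace

variable {𝕜 E α : Type*} [RCLike 𝕜] [NormedAddCommGroup E] [InnerProductSpace 𝕜 E]

theorem tendsto_of_tendsto_inner_of_isCompact {l : Filter α} {u : α → E} {K : Set E} {x : E}
    (hK : IsCompact K) (huK : ∀ᶠ a in l, u a ∈ K)
    (hw : ∀ y, Tendsto (fun a => ⟪u a, y⟫_𝕜) l (𝓝 ⟪x, y⟫_𝕜)) : Tendsto u l (𝓝 x) := by
  refine hK.tendsto_nhds_of_unique_mapClusterPt huK fun b _ hb => ext_inner_right 𝕜 fun y => ?_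
  have : NeBot (𝓝 ⟪b, y⟫_𝕜 ⊓ map (fun a => ⟪u a, y⟫_𝕜) l) :=
    hb.tendsto_comp ((continuous_id.inner continuous_const).tendsto b)
  exact tendsto_nhds_unique (f := id) (tendsto_id'.2 inf_le_left)
    (tendsto_id'.2 (inf_le_right.trans (hw y)))

theorem tendsto_of_tendsto_inner_of_tendsto_norm {l : Filter α} {u : α → E} {x : E}
    (hw : ∀ y, Tendsto (fun a => ⟪u a, y⟫_𝕜) l (𝓝 ⟪x, y⟫_𝕜))
    (hn : Tendsto (fun a => ‖u a‖) l (𝓝 ‖x‖)) : Tendsto u l (𝓝 x) := by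
  have hre : Tendsto (fun a => RCLike.re ⟪u a, x⟫_𝕜) l (𝓝 (‖x‖ ^ 2)) := by
    simpa only [Function.comp_def, inner_self_eq_norm_sq] using
      (RCLike.continuous_re.tendsto _).comp (hw x)
  have hsq : Tendsto (fun a => ‖u a - x‖ ^ 2) l (𝓝 0) := by
    convert ((hn.pow 2).sub (hre.const_mul 2)).add_const (‖x‖ ^ 2) using 1
    · ext a
      exact norm_sub_sq _ _
    · congr 1
      ring
  rw [tendsto_iff_norm_sub_tendsto_zero]
  simpa using hsq.sqrt

theorem tendsto_inner_of_tendsto_of_tendsto_inner {l : Filter α} {u v : α → E} {s : Set E}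
    {x v₀ : E} (hs : Bornology.IsBounded s) (hus : ∀ᶠ a in l, u a ∈ s)
    (hw : ∀ y, Tendsto (fun a => ⟪u a, y⟫_𝕜) l (𝓝 ⟪x, y⟫_𝕜)) (hv : Tendsto v l (𝓝 v₀)) :
    Tendsto (fun a => ⟪v a, u a⟫_𝕜) l (𝓝 ⟪v₀, x⟫_𝕜) := by
  obtain ⟨R, hR⟩ := hs.exists_norm_le
  have hsmall : Tendsto (fun a => ⟪v a - v₀, u a⟫_𝕜) l (𝓝 0) := by
    refine squeeze_zero_norm' (hus.mono fun a ha => (norm_inner_le_norm _ _).trans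
      (mul_le_mul_of_nonneg_left (hR _ ha) (norm_nonneg _))) ?_
    simpa using (tendsto_iff_norm_sub_tendsto_zero.1 hv).mul_const R
  have hweak : Tendsto (fun a => ⟪v₀, u a⟫_𝕜) l (𝓝 ⟪v₀, x⟫_𝕜) := by
    simpa only [Function.comp_def, inner_conj_symm] using
      (RCLike.continuous_conj.tendsto _).comp (hw v₀)
  simpa [inner_sub_left] using hsmall.add hweak

theorem ContinuousLinearMap.lipschitzOnWith_inner_apply_self (S : E →L[𝕜] E) {C R : NNReal}
    (hS : ‖S‖ ≤ C) :
    LipschitzOnWith (2 * C * R) (fun f => ⟪S f, f⟫_𝕜) (Metric.closedBall 0 R) := by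
  refine LipschitzOnWith.of_dist_le_mul fun f hf g hg => ?_
  rw [mem_closedBall_zero_iff] at hf hg
  have hsplit : ⟪S f, f⟫_𝕜 - ⟪S g, g⟫_𝕜 = ⟪S (f - g), f⟫_𝕜 + ⟪S g, f - g⟫_𝕜 := by
    simp only [map_sub, inner_sub_left, inner_sub_right]
    ring
  calc dist ⟪S f, f⟫_𝕜 ⟪S g, g⟫_𝕜 ≤ ‖S (f - g)‖ * ‖f‖ + ‖S g‖ * ‖f - g‖ := by
        rw [dist_eq_norm, hsplit]
        exact (norm_add_le _ _).trans
          (add_le_add (norm_inner_le_norm _ _) (norm_inner_le_norm _ _))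
    _ ≤ C * ‖f - g‖ * R + C * R * ‖f - g‖ := by
        gcongr
        · exact (S.le_opNorm _).trans (by gcongr)
        · exact (S.le_opNorm _).trans (by gcongr)
    _ = ↑(2 * C * R) * dist f g := by
        rw [dist_eq_norm]
        push_cast
        ring

variable [CompleteSpace E]

theorem IsCompactOperator.tendsto_of_tendsto_inner {T : E →L[𝕜] E} (hT : IsCompactOperator T)
    {l : Filter α} {u : α → E} {s : Set E} {x : E} (hs : Bornology.IsBounded s)
    (hus : ∀ᶠ a in l, u a ∈ s) (hw : ∀ y, Tendsto (fun a => ⟪u a, y⟫_𝕜) l (𝓝 ⟪x, y⟫_𝕜)) :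
    Tendsto (fun a => T (u a)) l (𝓝 (T x)) := by
  refine tendsto_of_tendsto_inner_of_isCompact (𝕜 := 𝕜)
    (hT.isCompact_closure_image_of_bounded hs)
    (hus.mono fun a ha => subset_closure (mem_image_of_mem T ha)) fun y => ?_
  simpa only [← ContinuousLinearMap.adjoint_inner_right] using
    hw (ContinuousLinearMap.adjoint T y)

theorem Ultrafilter.exists_tendsto_inner_of_isBounded (U : Ultrafilter E) {s : Set E}
    (hs : Bornology.IsBounded s) (hU : ↑U ≤ 𝓟 s) :
    ∃ x : E, ∀ y, Tendsto (fun f => ⟪f, y⟫_𝕜) U (𝓝 ⟪x, y⟫_𝕜) := by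
  let ι : E → WeakDual 𝕜 E := fun f => StrongDual.toWeakDual (innerSL 𝕜 f)
  have hK : IsCompact (closure (ι '' s)) :=
    WeakDual.isCompact_of_bounded_of_closed
      (WeakDual.isBounded_closure ((innerSL 𝕜 (E := E)).lipschitz.isBounded_image hs))
      isClosed_closure
  obtain ⟨φ, -, hφ⟩ := hK.ultrafilter_le_nhds (U.map ι)
    (by rw [Ultrafilter.coe_map]; exact (tendsto_principal_principal.2 fun f hf =>
      subset_closure (mem_image_of_mem ι hf)).mono_left hU)
  refine ⟨(InnerProductSpace.toDual 𝕜 E).symm (WeakDual.toStrongDual φ), fun y => ?_⟩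
  rw [InnerProductSpace.toDual_symm_apply]
  exact ((WeakDual.eval_continuous y).tendsto φ).comp hφ

theorem bddAbove_range_norm_of_bddAbove_range_inner {ι : Type*} {S : ι → E →L[𝕜] E}
    (h : ∀ x y, BddAbove (range fun i => ‖⟪S i x, y⟫_𝕜‖)) :
    BddAbove (range fun i => ‖S i‖) := by
  refine (banach_steinhaus (g := S) fun x => ?_).imp fun C hC => ?_
  · obtain ⟨C, hC⟩ := banach_steinhaus (g := fun i => innerSL 𝕜 (S i x)) fun y =>
      (h x y).imp fun C hC i => hC (mem_range_self i)
    exact ⟨C, fun i => by simpa using hC i⟩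
  · exact forall_mem_range.2 hC

theorem isCompact_closure_of_tendstoUniformlyOn_inner_apply_self {ι : Type*} {l : Filter ι}
    [l.NeBot] {T : ι → E →L[𝕜] E} (hT : ∀ i, IsCompactOperator (T i))
    (hconv : ∀ f, Tendsto (fun i => ⟪T i f, f⟫_𝕜) l (𝓝 ⟪f, f⟫_𝕜)) {F : Set E}
    (hF : Bornology.IsBounded F)
    (hunif : TendstoUniformlyOn (fun i f => ⟪T i f, f⟫_𝕜) (fun f => ⟪f, f⟫_𝕜) l F) :
    IsCompact (closure F) := by
  refine (totallyBounded_iff_ultrafilter.2 fun U hU => ?_).closure.isCompact_of_isClosed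
    isClosed_closure
  have hFU : ∀ᶠ f in (U : Filter E), f ∈ F := hU (mem_principal_self F)
  obtain ⟨x, hx⟩ := U.exists_tendsto_inner_of_isBounded (𝕜 := 𝕜) hF hU
  have hTx : ∀ i, Tendsto (fun f => ⟪T i f, f⟫_𝕜) U (𝓝 ⟪T i x, x⟫_𝕜) := fun i =>
    tendsto_inner_of_tendsto_of_tendsto_inner hF hFU hx ((hT i).tendsto_of_tendsto_inner hF hFU hx)
  have hinner : Tendsto (fun f => ⟪f, f⟫_𝕜) (U : Filter E) (𝓝 ⟪x, x⟫_𝕜) :=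
    ((tendstoUniformlyOn_iff_tendstoUniformlyOnFilter.1 hunif).mono_right hU)
      |>.tendsto_of_eventually_tendsto (Eventually.of_forall hTx) (hconv x)
  have hnorm : Tendsto (fun f => ‖id f‖) (U : Filter E) (𝓝 ‖x‖) := by
    simpa only [Function.comp_def, id_eq, ← norm_eq_sqrt_re_inner] using
      ((RCLike.continuous_re.tendsto _).comp hinner).sqrt
  exact cauchy_nhds.mono (tendsto_id'.1 (tendsto_of_tendsto_inner_of_tendsto_norm hx hnorm))

end InnerProductSpace

section Complex

variable {V : Type*} [NormedAddCommGroup V] [InnerProductSpace ℂ V]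

theorem tendsto_inner_apply_of_tendsto_inner_apply_self {ι : Type*} {l : Filter ι}
    {S : ι → V →ₗ[ℂ] V} (h : ∀ f, Tendsto (fun i => ⟪S i f, f⟫_ℂ) l (𝓝 0)) (x y : V) :
    Tendsto (fun i => ⟪S i x, y⟫_ℂ) l (𝓝 0) := by
  have := ((((h (x + y)).sub (h (x - y))).sub ((h (x + Complex.I • y)).const_mul Complex.I)).add
    ((h (x - Complex.I • y)).const_mul Complex.I)).div_const 4
  simp only [mul_zero, sub_zero, add_zero, zero_div] at this
  simpa only [← inner_map_polarization'] using this

theorem tendstoUniformlyOn_inner_apply_self_of_isCompact [CompleteSpace V] {S : ℕ → V →L[ℂ] V}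
    (h : ∀ f, Tendsto (fun n => ⟪S n f, f⟫_ℂ) atTop (𝓝 0)) {K : Set V} (hK : IsCompact K) :
    TendstoUniformlyOn (fun n f => ⟪S n f, f⟫_ℂ) 0 atTop K := by
  obtain ⟨C, hC⟩ := bddAbove_range_norm_of_bddAbove_range_inner fun x y =>
    (tendsto_inner_apply_of_tendsto_inner_apply_self (S := fun n => (S n : V →ₗ[ℂ] V)) h x y
      ).norm.bddAbove_range
  obtain ⟨R, hR⟩ := hK.isBounded.exists_norm_le
  have hKR : K ⊆ Metric.closedBall 0 R.toNNReal := fun f hf =>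
    mem_closedBall_zero_iff.2 ((hR f hf).trans (Real.le_coe_toNNReal R))
  have hlip : ∀ n, LipschitzOnWith (2 * C.toNNReal * R.toNNReal) (fun f => ⟪S n f, f⟫_ℂ) K :=
    fun n => ((S n).lipschitzOnWith_inner_apply_self
      ((hC (mem_range_self n)).trans (Real.le_coe_toNNReal C))).mono hKR
  exact EquicontinuousOn.tendstoUniformlyOn_of_tendsto hK
    (LipschitzOnWith.uniformEquicontinuousOn _ _ hlip).equicontinuousOn fun f _ => h f

end Complex

/-- Hilbert space Riesz–Kolmogorov type criterion with quadratic form conditions: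
if `(T n)` are compact operators on a Hilbert space `H` with `⟪T n f - f, f⟫ → 0` for each
`f`, then a bounded set `F ⊆ H` is precompact iff `sup_{f ∈ F} |⟪T n f - f, f⟫| → 0`. -/
theorem hilbert_riesz_kolmogorov
    {H : Type*} [NormedAddCommGroup H] [InnerProductSpace ℂ H] [CompleteSpace H]
    (T : ℕ → H →L[ℂ] H) (hT : ∀ n, IsCompactOperator (T n))
    (hconv : ∀ f : H,
      Filter.Tendsto (fun n => ⟪T n f - f, f⟫_ℂ) Filter.atTop (nhds 0))
    (F : Set H) (hF : Bornology.IsBounded F) :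
    IsCompact (closure F) ↔
      ∀ ε > 0, ∃ N : ℕ, ∀ n ≥ N, ∀ f ∈ F, ‖⟪T n f - f, f⟫_ℂ‖ < ε := by
  constructor
  · intro hK ε hε
    have hq : ∀ f, Tendsto (fun n => ⟪(T n - 1) f, f⟫_ℂ) atTop (𝓝 0) := by simpa using hconv
    obtain ⟨N, hN⟩ := eventually_atTop.1 <|
      Metric.tendstoUniformlyOn_iff.1 (tendstoUniformlyOn_inner_apply_self_of_isCompact hq hK) ε hε
    refine ⟨N, fun n hn f hf => ?_⟩
    have h := hN n hn f (subset_closure hf)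
    rwa [Pi.zero_apply, dist_zero_left] at h
  · intro hsmall
    refine isCompact_closure_of_tendstoUniformlyOn_inner_apply_self (l := atTop) hT
      (fun f => ?_) hF <| Metric.tendstoUniformlyOn_iff.2 fun ε hε => ?_
    · simpa [inner_sub_left] using (hconv f).add_const ⟪f, f⟫_ℂ
    · filter_upwards [eventually_atTop.2 (hsmall ε hε)] with n hn f hf
      simpa [dist_eq_norm, inner_sub_left, norm_sub_rev] using hn f hf
end

section
/- Let H be a Hilbert space with a continuous Parseval frame {k_x}_{x∈X} over a measure space (X, μ), and let F ⊆ H be precompact. Let (F_n) be an increasing exhaustion of X. Then lim_{n→∞} sup_{f∈F} ∫_{X∖F_n} |⟨f, k_x⟩|² dμ(x) = 0. -/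
open scoped InnerProductSpace
open MeasureTheory Filter

/-- Forward direction of the frame Riesz–Kolmogorov criterion: if `{k x}` is a continuous
Parseval frame for `H`, `(A n)` an increasing exhaustion of the index space, and `F ⊆ H`
is precompact, then the frame coefficients of elements of `F` have uniformly small tails. -/
theorem precompact_implies_uniform_tail_decay
    {H : Type*} [NormedAddCommGroup H] [InnerProductSpace ℂ H] [CompleteSpace H]
    {Y : Type*} [MeasurableSpace Y] (μ : Measure Y) (k : Y → H)
    (hmeas : ∀ f : H, Measurable fun x => ⟪f, k x⟫_ℂ)
    (hParseval : ∀ f : H, ∫ x, ‖⟪f, k x⟫_ℂ‖ ^ 2 ∂μ = ‖f‖ ^ 2)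
    (A : ℕ → Set Y) (hAmeas : ∀ n, MeasurableSet (A n)) (hmono : Monotone A)
    (hunion : (⋃ n, A n) = Set.univ)
    (F : Set H) (hF : IsCompact (closure F)) :
    ∀ ε > 0, ∃ N : ℕ, ∀ n ≥ N, ∀ f ∈ F,
      ∫ x in (A n)ᶜ, ‖⟪f, k x⟫_ℂ‖ ^ 2 ∂μ < ε := by
  intro ε hε
  -- integrability of the coefficient function
  have hint : ∀ g : H, Integrable (fun x => ‖⟪g, k x⟫_ℂ‖ ^ 2) μ := by
    intro g
    by_cases hg : g = 0
    · simp [hg]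
    · by_contra h
      have hP := hParseval g
      rw [integral_undef h] at hP
      have : ‖g‖ = 0 := by nlinarith [norm_nonneg g]
      exact hg (norm_eq_zero.mp this)
  -- tails of a fixed element tend to 0
  have htail : ∀ g : H, Tendsto (fun n => ∫ x in (A n)ᶜ, ‖⟪g, k x⟫_ℂ‖ ^ 2 ∂μ)
      atTop (nhds 0) := by
    intro g
    have h1 : Tendsto (fun n => ∫ x in A n, ‖⟪g, k x⟫_ℂ‖ ^ 2 ∂μ) atTop
        (nhds (∫ x in ⋃ n, A n, ‖⟪g, k x⟫_ℂ‖ ^ 2 ∂μ)) :=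
      tendsto_setIntegral_of_monotone hAmeas hmono ((hint g).integrableOn)
    rw [hunion, setIntegral_univ] at h1
    have h2 : ∀ n, ∫ x in (A n)ᶜ, ‖⟪g, k x⟫_ℂ‖ ^ 2 ∂μ
        = (∫ x, ‖⟪g, k x⟫_ℂ‖ ^ 2 ∂μ) - ∫ x in A n, ‖⟪g, k x⟫_ℂ‖ ^ 2 ∂μ := by
      intro n
      have := integral_add_compl (hAmeas n) (hint g)
      linarith
    simp_rw [h2]
    have h3 := h1.const_sub (∫ x, ‖⟪g, k x⟫_ℂ‖ ^ 2 ∂μ)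
    simpa using h3
  set δ := Real.sqrt (ε / 4) with hδdef
  have hδpos : 0 < δ := Real.sqrt_pos.mpr (by linarith)
  have hδsq : δ ^ 2 = ε / 4 := Real.sq_sqrt (by linarith)
  -- finite δ-net
  have htb : TotallyBounded F := hF.totallyBounded.subset subset_closure
  obtain ⟨t, htfin, htcov⟩ := Metric.totallyBounded_iff.mp htb δ hδpos
  -- uniform N for the net
  have hev : ∀ᶠ n in atTop, ∀ c ∈ t, ∫ x in (A n)ᶜ, ‖⟪c, k x⟫_ℂ‖ ^ 2 ∂μ < ε / 4 := by
    rw [eventually_all_finite htfin]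
    intro c _
    exact (htail c).eventually (eventually_lt_nhds (by linarith : (0:ℝ) < ε / 4))
  obtain ⟨N, hN⟩ := eventually_atTop.mp hev
  refine ⟨N, fun n hn f hf => ?_⟩
  obtain ⟨c, hct, hfc⟩ := Set.mem_iUnion₂.mp (htcov hf)
  have hdist : ‖f - c‖ < δ := by
    have := Metric.mem_ball.mp hfc
    rwa [dist_eq_norm] at this
  -- pointwise bound
  have hpt : ∀ x, ‖⟪f, k x⟫_ℂ‖ ^ 2 ≤ 2 * ‖⟪f - c, k x⟫_ℂ‖ ^ 2 + 2 * ‖⟪c, k x⟫_ℂ‖ ^ 2 := by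
    intro x
    have he : ⟪f, k x⟫_ℂ = ⟪f - c, k x⟫_ℂ + ⟪c, k x⟫_ℂ := by
      rw [inner_sub_left]; ring
    have h1 : ‖⟪f, k x⟫_ℂ‖ ≤ ‖⟪f - c, k x⟫_ℂ‖ + ‖⟪c, k x⟫_ℂ‖ := by
      rw [he]; exact norm_add_le _ _
    nlinarith [norm_nonneg (⟪f - c, k x⟫_ℂ), norm_nonneg (⟪c, k x⟫_ℂ),
      norm_nonneg (⟪f, k x⟫_ℂ), sq_nonneg (‖⟪f - c, k x⟫_ℂ‖ - ‖⟪c, k x⟫_ℂ‖)]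
  have hmono1 : ∫ x in (A n)ᶜ, ‖⟪f, k x⟫_ℂ‖ ^ 2 ∂μ
      ≤ ∫ x in (A n)ᶜ, (2 * ‖⟪f - c, k x⟫_ℂ‖ ^ 2 + 2 * ‖⟪c, k x⟫_ℂ‖ ^ 2) ∂μ := by
    refine integral_mono ((hint f).restrict) ?_ hpt
    exact (((hint (f - c)).const_mul 2).add ((hint c).const_mul 2)).restrict
  have hsplit : ∫ x in (A n)ᶜ, (2 * ‖⟪f - c, k x⟫_ℂ‖ ^ 2 + 2 * ‖⟪c, k x⟫_ℂ‖ ^ 2) ∂μ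
      = 2 * (∫ x in (A n)ᶜ, ‖⟪f - c, k x⟫_ℂ‖ ^ 2 ∂μ)
        + 2 * (∫ x in (A n)ᶜ, ‖⟪c, k x⟫_ℂ‖ ^ 2 ∂μ) := by
    rw [integral_add (((hint (f - c)).const_mul 2).restrict) (((hint c).const_mul 2).restrict),
      integral_const_mul, integral_const_mul]
  have hsmall : ∫ x in (A n)ᶜ, ‖⟪f - c, k x⟫_ℂ‖ ^ 2 ∂μ ≤ ‖f - c‖ ^ 2 := by
    rw [← hParseval (f - c)]
    exact setIntegral_le_integral (hint (f - c))
      (Filter.Eventually.of_forall fun x => by positivity)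
  have hnet : ∫ x in (A n)ᶜ, ‖⟪c, k x⟫_ℂ‖ ^ 2 ∂μ < ε / 4 := hN n hn c hct
  have hfc2 : ‖f - c‖ ^ 2 < ε / 4 := by
    have := sq_lt_sq' (by linarith [norm_nonneg (f - c)]) hdist
    calc ‖f - c‖ ^ 2 < δ ^ 2 := this
    _ = ε / 4 := hδsq
  linarith
end

section
/- Let p ∈ [1, ∞) and X be a reflexive Banach space with a continuous frame ({f_x}, {f_x*}) with respect to L^p(X, μ): sup_x ‖f_x*‖ < ∞, x ↦ ⟨f, f_x*⟩ lies in L^p(μ) for all f, and there are constants c, C > 0 with c‖f‖ ≤ ‖⟨f, f_·*⟩‖_{L^p(μ)} ≤ C‖f‖. Suppose (F_n) is an increasing exhaustion of X with μ(F_n) < ∞. Then a bounded set F ⊆ X is precompact if and only if lim_{n→∞} sup_{f∈F} ∫_{X∖F_n} |⟨f, f_x*⟩|^p dμ(x) = 0. -/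
/-!
The coefficients `y ↦ ⟨f, f_y*⟩` restricted to a set `S` have an `L^p(S)` norm `q_S f`, a
seminorm on `X` with `q_S ≤ C ‖·‖` by the upper frame bound. If `closure F` is compact, the
tail seminorms `q_{(A n)ᶜ}` are uniformly Lipschitz and tend to zero pointwise, hence uniformly
on `F`. Conversely, by reflexivity every sequence in `F` has a weakly convergent subsequence;
on the finite-measure set `A n` the coefficients are dominated by `sup_y ‖f_y*‖ · sup_F ‖f‖`,
so dominated convergence turns weak convergence into `q_{A n}`-convergence, the tails
`q_{(A n)ᶜ}` are uniformly small on `F`, and the lower frame bound makes the subsequence Cauchy.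
-/

open MeasureTheory NormedSpace Filter Topology TopologicalSpace

theorem totallyBounded_of_forall_exists_cauchySeq_subseq {X : Type*} [PseudoMetricSpace X]
    {s : Set X}
    (h : ∀ u : ℕ → X, (∀ n, u n ∈ s) → ∃ φ : ℕ → ℕ, StrictMono φ ∧ CauchySeq (u ∘ φ)) :
    TotallyBounded s := by
  refine Metric.totallyBounded_iff.2 fun ε hε => ?_
  by_contra! hcover
  have hfar : ∀ t : Set X, t.Finite → ∃ x, x ∈ s ∧ ∀ y ∈ t, ε ≤ dist x y := fun t ht => by
    obtain ⟨x, hxs, hx⟩ := Set.not_subset.1 (hcover t ht)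
    exact ⟨x, hxs, fun y hy => not_lt.1 fun hxy => hx (Set.mem_biUnion hy hxy)⟩
  obtain ⟨u, hu⟩ := Set.seq_of_forall_finite_exists hfar
  obtain ⟨φ, hφ, hCauchy⟩ := h u fun n => (hu n).1
  obtain ⟨N, hN⟩ := Metric.cauchySeq_iff.1 hCauchy ε hε
  exact (hN (N + 1) N.le_succ N le_rfl).not_ge
    ((hu _).2 _ ⟨φ N, hφ (Nat.lt_add_one N), rfl⟩)

theorem TotallyBounded.eventually_forall_lt_of_tendsto_zero {E ι : Type*}
    [SeminormedAddCommGroup E] {l : Filter ι} {q : ι → AddGroupSeminorm E} {C : ℝ}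
    (hqC : ∀ i x, q i x ≤ C * ‖x‖) (hq : ∀ x, Tendsto (fun i => q i x) l (𝓝 0))
    {s : Set E} (hs : TotallyBounded s) {ε : ℝ} (hε : 0 < ε) :
    ∀ᶠ i in l, ∀ x ∈ s, q i x < ε := by
  set K := max C 1
  have hK : 0 < K := lt_max_of_lt_right one_pos
  obtain ⟨t, ht, hst⟩ := Metric.totallyBounded_iff.1 hs (ε / (2 * K)) (by positivity)
  have hnet : ∀ᶠ i in l, ∀ y ∈ t, q i y < ε / 2 :=
    (eventually_all_finite ht).2 fun y _ => (hq y).eventually_lt_const (half_pos hε)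
  filter_upwards [hnet] with i hi x hx
  obtain ⟨y, hy, hxy⟩ := Set.mem_iUnion₂.1 (hst hx)
  have hxy' : q i (x - y) ≤ ε / 2 := calc
    q i (x - y) ≤ K * ‖x - y‖ :=
      (hqC i _).trans (mul_le_mul_of_nonneg_right (le_max_left C 1) (norm_nonneg _))
    _ ≤ K * (ε / (2 * K)) := by
      rw [← dist_eq_norm]
      exact mul_le_mul_of_nonneg_left (Metric.mem_ball.1 hxy).le hK.le
    _ = ε / 2 := by field_simp
  calc q i x ≤ q i y + q i (x - y) := by simpa using map_add_le_add (q i) y (x - y)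
    _ < ε / 2 + ε / 2 := add_lt_add_of_lt_of_le (hi y hy) hxy'
    _ = ε := add_halves ε

section Reflexive

variable {𝕜 E : Type*} [RCLike 𝕜] [NormedAddCommGroup E] [NormedSpace 𝕜 E]

theorem Submodule.exists_strongDual_apply_ne_zero_of_notMem {p : Submodule 𝕜 E}
    (hp : IsClosed (p : Set E)) {x : E} (hx : x ∉ p) :
    ∃ f : StrongDual 𝕜 E, f x ≠ 0 ∧ ∀ y ∈ p, f y = 0 := by
  let q : E →L[𝕜] E ⧸ p := p.mkQL
  have hqx : q x ≠ 0 := by simpa [q, Submodule.Quotient.mk_eq_zero] using hx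
  obtain ⟨g, -, hg⟩ := exists_dual_vector 𝕜 (q x) (norm_ne_zero_iff.mpr hqx)
  refine ⟨g.comp q, ?_, fun y hy => ?_⟩
  · simpa [hg] using hqx
  · simp [q, (Submodule.Quotient.mk_eq_zero p).mpr hy]

theorem Submodule.surjective_inclusionInDoubleDual {p : Submodule 𝕜 E}
    (hp : IsClosed (p : Set E)) (hE : Function.Surjective (inclusionInDoubleDual 𝕜 E)) :
    Function.Surjective (inclusionInDoubleDual 𝕜 p) := by
  let restrict : StrongDual 𝕜 E →L[𝕜] StrongDual 𝕜 p :=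
    (ContinuousLinearMap.compL 𝕜 p E 𝕜).flip p.subtypeL
  intro ψ
  obtain ⟨x, hx⟩ := hE (ψ.comp restrict)
  have hψ : ∀ g : StrongDual 𝕜 E, g x = ψ (restrict g) := fun g => congrArg (· g) hx
  have hxp : x ∈ p := by
    by_contra hxp
    obtain ⟨g, hgx, hg⟩ := p.exists_strongDual_apply_ne_zero_of_notMem hp hxp
    have : restrict g = 0 := ContinuousLinearMap.ext fun y => hg y y.2
    exact hgx (by rw [hψ, this, map_zero])
  refine ⟨⟨x, hxp⟩, ContinuousLinearMap.ext fun h => ?_⟩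
  obtain ⟨g, hg, -⟩ := exists_extension_norm_eq p h
  have : restrict g = h := ContinuousLinearMap.ext hg
  rw [dual_def, ← this, ← hψ]
  rfl

theorem ContinuousLinearMap.exists_norm_le_one_half_le_norm_apply {F : Type*}
    [NormedAddCommGroup F] [NormedSpace 𝕜 F] (f : E →L[𝕜] F) :
    ∃ x : E, ‖x‖ ≤ 1 ∧ ‖f‖ / 2 ≤ ‖f x‖ := by
  rcases (norm_nonneg f).eq_or_lt with hf | hf
  · exact ⟨0, by simp, by simp [← hf]⟩
  · obtain ⟨x, hx, hfx⟩ := f.exists_lt_apply_of_lt_opNorm (half_lt_self hf)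
    exact ⟨x, hx.le, hfx.le⟩

theorem separableSpace_of_separableSpace_strongDual [SeparableSpace (StrongDual 𝕜 E)] :
    SeparableSpace E := by
  obtain ⟨u, hu⟩ := exists_dense_seq (StrongDual 𝕜 E)
  choose x hx hux using fun n => (u n).exists_norm_le_one_half_le_norm_apply
  let V := (Submodule.span 𝕜 (Set.range x)).topologicalClosure
  have hxV : ∀ n, x n ∈ V := fun n =>
    Submodule.le_topologicalClosure _ (Submodule.subset_span ⟨n, rfl⟩)
  -- `x n` nearly norms `u n`, so no `u n` is close to a nonzero functional vanishing on `V`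
  have hV : ∀ g : StrongDual 𝕜 E, (∀ y ∈ V, g y = 0) → g = 0 := by
    intro g hg
    have hgu : ∀ n, ‖g‖ ≤ 3 * dist (u n) g := fun n => by
      have : ‖u n‖ / 2 ≤ ‖u n - g‖ := calc
        ‖u n‖ / 2 ≤ ‖(u n - g) (x n)‖ := by simpa [hg _ (hxV n)] using hux n
        _ ≤ ‖u n - g‖ * ‖x n‖ := (u n - g).le_opNorm _
        _ ≤ ‖u n - g‖ := mul_le_of_le_one_right (norm_nonneg _) (hx n)
      rw [dist_eq_norm]
      linarith [norm_sub_norm_le g (u n), norm_sub_rev g (u n)]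
    by_contra hg0
    obtain ⟨n, hn⟩ := Metric.denseRange_iff.mp hu g (‖g‖ / 3) (by positivity)
    linarith [hgu n, dist_comm g (u n)]
  have hVtop : ∀ y : E, y ∈ V := by
    by_contra! ⟨y, hy⟩
    obtain ⟨g, hgy, hg⟩ :=
      V.exists_strongDual_apply_ne_zero_of_notMem (Submodule.isClosed_topologicalClosure _) hy
    exact hgy (by simp [hV g hg])
  rw [← isSeparable_univ_iff, show Set.univ = (V : Set E) from
    (Set.eq_univ_of_forall hVtop).symm, Submodule.topologicalClosure_coe]
  exact (Set.countable_range x).isSeparable.span.closure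

theorem separableSpace_strongDual_of_surjective_inclusionInDoubleDual [SeparableSpace E]
    (hE : Function.Surjective (inclusionInDoubleDual 𝕜 E)) :
    SeparableSpace (StrongDual 𝕜 E) :=
  have := hE.denseRange.separableSpace (inclusionInDoubleDual 𝕜 E).continuous
  separableSpace_of_separableSpace_strongDual (𝕜 := 𝕜)

theorem exists_subseq_weakly_tendsto_of_surjective_inclusionInDoubleDual
    (hE : Function.Surjective (inclusionInDoubleDual 𝕜 E)) {v : ℕ → E} {M : ℝ}
    (hv : ∀ k, ‖v k‖ ≤ M) :
    ∃ (φ : ℕ → ℕ) (x : E), StrictMono φ ∧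
      ∀ g : StrongDual 𝕜 E, Tendsto (fun k => g (v (φ k))) atTop (𝓝 (g x)) := by
  let V := (Submodule.span 𝕜 (Set.range v)).topologicalClosure
  have hvV : ∀ k, v k ∈ V := fun k =>
    Submodule.le_topologicalClosure _ (Submodule.subset_span ⟨k, rfl⟩)
  have hV := V.surjective_inclusionInDoubleDual (Submodule.isClosed_topologicalClosure _) hE
  have : SeparableSpace V := by
    refine IsSeparable.separableSpace ?_
    rw [Submodule.topologicalClosure_coe]
    exact (Set.countable_range v).isSeparable.span.closure
  have := separableSpace_strongDual_of_surjective_inclusionInDoubleDual hV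
  -- sequential Banach–Alaoglu in `V'' ≅ V`, which needs `V'` to be separable
  let w : ℕ → WeakDual 𝕜 (StrongDual 𝕜 V) := fun k =>
    StrongDual.toWeakDual (inclusionInDoubleDual 𝕜 V ⟨v k, hvV k⟩)
  have hw : ∀ k, w k ∈ WeakDual.toStrongDual ⁻¹' Metric.closedBall 0 M := fun k =>
    Set.mem_preimage.2 ((mem_closedBall_zero_iff (E := StrongDual 𝕜 (StrongDual 𝕜 V))).2
      ((double_dual_bound 𝕜 V _).trans (hv k)))
  obtain ⟨Ψ, -, φ, hφ, hwΨ⟩ := WeakDual.isSeqCompact_closedBall 𝕜 _ 0 M hw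
  obtain ⟨x, hx⟩ := hV (WeakDual.toStrongDual Ψ)
  refine ⟨φ, x, hφ, fun g => ?_⟩
  have hΨ : Ψ (g.comp V.subtypeL) = g x := (congrArg (· (g.comp V.subtypeL)) hx).symm
  rw [← hΨ]
  exact (WeakDual.eval_continuous (g.comp V.subtypeL)).continuousAt.tendsto.comp hwΨ

theorem isCompact_closure_of_forall_exists_addGroupSeminorm [CompleteSpace E]
    (hE : Function.Surjective (inclusionInDoubleDual 𝕜 E)) {F : Set E}
    (hF : Bornology.IsBounded F) {c : ℝ} (hc : 0 < c)
    (hq : ∀ ε > 0, ∃ q : AddGroupSeminorm E,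
      (∀ (v : ℕ → E) (x : E) (M : ℝ), (∀ k, ‖v k‖ ≤ M) →
        (∀ g : StrongDual 𝕜 E, Tendsto (fun k => g (v k)) atTop (𝓝 (g x))) →
          Tendsto (fun k => q (v k - x)) atTop (𝓝 0)) ∧
      ∀ f ∈ F, ∀ g ∈ F, c * ‖f - g‖ ≤ q (f - g) + ε) :
    IsCompact (closure F) := by
  refine (totallyBounded_of_forall_exists_cauchySeq_subseq fun u hu => ?_).closure
    |>.isCompact_of_isClosed isClosed_closure
  obtain ⟨M, hM⟩ := hF.exists_norm_le
  obtain ⟨φ, x, hφ, hux⟩ :=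
    exists_subseq_weakly_tendsto_of_surjective_inclusionInDoubleDual hE fun k => hM _ (hu k)
  refine ⟨φ, hφ, Metric.cauchySeq_iff.2 fun ε hε => ?_⟩
  obtain ⟨q, hqweak, hqF⟩ := hq (c * ε / 2) (by positivity)
  obtain ⟨N, hN⟩ := eventually_atTop.1 <|
    (hqweak _ x M (fun k => hM _ (hu (φ k))) hux).eventually_lt_const
      (show 0 < c * ε / 4 by positivity)
  refine ⟨N, fun a ha b hb => ?_⟩
  have hqab : q (u (φ a) - u (φ b)) < c * ε / 2 := calc
    q (u (φ a) - u (φ b)) ≤ q (u (φ a) - x) + q (u (φ b) - x) := by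
      simpa using map_sub_le_add q (u (φ a) - x) (u (φ b) - x)
    _ < c * ε / 4 + c * ε / 4 := add_lt_add (hN a ha) (hN b hb)
    _ = c * ε / 2 := by ring
  have := hqF _ (hu (φ a)) _ (hu (φ b))
  rw [Function.comp_apply, Function.comp_apply, dist_eq_norm]
  exact lt_of_mul_lt_mul_left (by linarith) hc.le

end Reflexive

section LpNorm

variable {α E : Type*} [MeasurableSpace α] {μ : Measure α} [NormedAddCommGroup E] {p : ℝ}

theorem MeasureTheory.Integrable.memLp_norm_of_rpow {f : α → E} (hp : 0 < p)
    (hf : Integrable (fun x => ‖f x‖ ^ p) μ) :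
    MemLp (fun x => ‖f x‖) (ENNReal.ofReal p) μ := by
  have hmeas : AEStronglyMeasurable (fun x => ‖f x‖) μ :=
    (hf.aemeasurable.pow_const p⁻¹).aestronglyMeasurable.congr
      (Eventually.of_forall fun x => Real.rpow_rpow_inv (norm_nonneg _) hp.ne')
  refine (integrable_norm_rpow_iff hmeas (by simpa using hp) ENNReal.ofReal_ne_top).1 ?_
  simpa [ENNReal.toReal_ofReal hp.le] using hf

theorem rpow_integral_norm_rpow_eq_toReal_eLpNorm {f : α → E} (hp : 0 < p)
    (hf : Integrable (fun x => ‖f x‖ ^ p) μ) :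
    (∫ x, ‖f x‖ ^ p ∂μ) ^ (1 / p) =
      (eLpNorm (fun x => ‖f x‖) (ENNReal.ofReal p) μ).toReal := by
  rw [(hf.memLp_norm_of_rpow hp).eLpNorm_eq_integral_rpow_norm (by simpa using hp)
    ENNReal.ofReal_ne_top, ENNReal.toReal_ofReal (by positivity)]
  simp [ENNReal.toReal_ofReal hp.le]

theorem rpow_integral_norm_rpow_le_add {f g h : α → E} (hp : 1 ≤ p)
    (hf : Integrable (fun x => ‖f x‖ ^ p) μ) (hg : Integrable (fun x => ‖g x‖ ^ p) μ)
    (hh : Integrable (fun x => ‖h x‖ ^ p) μ) (hfgh : ∀ x, ‖h x‖ ≤ ‖f x‖ + ‖g x‖) :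
    (∫ x, ‖h x‖ ^ p ∂μ) ^ (1 / p) ≤
      (∫ x, ‖f x‖ ^ p ∂μ) ^ (1 / p) + (∫ x, ‖g x‖ ^ p ∂μ) ^ (1 / p) := by
  have hp0 : 0 < p := by linarith
  have hf' := hf.memLp_norm_of_rpow hp0
  have hg' := hg.memLp_norm_of_rpow hp0
  rw [rpow_integral_norm_rpow_eq_toReal_eLpNorm hp0 hh,
    rpow_integral_norm_rpow_eq_toReal_eLpNorm hp0 hf,
    rpow_integral_norm_rpow_eq_toReal_eLpNorm hp0 hg]
  rw [← ENNReal.toReal_add hf'.eLpNorm_ne_top hg'.eLpNorm_ne_top]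
  refine ENNReal.toReal_mono (ENNReal.add_ne_top.2 ⟨hf'.eLpNorm_ne_top, hg'.eLpNorm_ne_top⟩) ?_
  calc eLpNorm (fun x => ‖h x‖) (ENNReal.ofReal p) μ
      ≤ eLpNorm ((fun x => ‖f x‖) + fun x => ‖g x‖) (ENNReal.ofReal p) μ :=
        eLpNorm_mono fun x => by simpa [abs_of_nonneg (add_nonneg (norm_nonneg (f x))
          (norm_nonneg (g x)))] using hfgh x
    _ ≤ _ := eLpNorm_add_le hf'.1 hg'.1 (by simpa using hp)

end LpNorm

section CoeffSeminorm

variable {𝕜 X Y : Type*} [RCLike 𝕜] [NormedAddCommGroup X] [NormedSpace 𝕜 X]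
  [MeasurableSpace Y] {μ : Measure Y} {p : ℝ} {fstar : Y → StrongDual 𝕜 X}

noncomputable def coeffSeminorm (hp : 1 ≤ p)
    (hint : ∀ f, Integrable (fun y => ‖fstar y f‖ ^ p) μ) (S : Set Y) : AddGroupSeminorm X where
  toFun f := (∫ y in S, ‖fstar y f‖ ^ p ∂μ) ^ (1 / p)
  map_zero' := by
    have hp0 : p ≠ 0 := by linarith
    simp [Real.zero_rpow hp0, Real.zero_rpow (inv_ne_zero hp0)]
  add_le' f g := rpow_integral_norm_rpow_le_add hp (hint f).integrableOn (hint g).integrableOn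
    (hint _).integrableOn fun y => by simpa using norm_add_le (fstar y f) (fstar y g)
  neg' f := by simp

variable (hp : 1 ≤ p) (hint : ∀ f, Integrable (fun y => ‖fstar y f‖ ^ p) μ)
include hp hint

theorem coeffSeminorm_lt_rpow_iff {S : Set Y} {f : X} {ε : ℝ} (hε : 0 ≤ ε) :
    coeffSeminorm hp hint S f < ε ^ (1 / p) ↔ ∫ y in S, ‖fstar y f‖ ^ p ∂μ < ε :=
  Real.rpow_lt_rpow_iff (integral_nonneg fun _ => by positivity) hε (by positivity)

theorem tendsto_coeffSeminorm_of_tendsto_integral {ι : Type*} {l : Filter ι} {S : ι → Set Y}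
    {f : ι → X} (h : Tendsto (fun i => ∫ y in S i, ‖fstar y (f i)‖ ^ p ∂μ) l (𝓝 0)) :
    Tendsto (fun i => coeffSeminorm hp hint (S i) (f i)) l (𝓝 0) := by
  have hp0 : 0 < 1 / p := by positivity
  have := h.rpow_const (Or.inr hp0.le)
  rwa [Real.zero_rpow hp0.ne'] at this

theorem coeffSeminorm_le (S : Set Y) (f : X) :
    coeffSeminorm hp hint S f ≤ (∫ y, ‖fstar y f‖ ^ p ∂μ) ^ (1 / p) :=
  Real.rpow_le_rpow (integral_nonneg fun _ => by positivity)
    (setIntegral_le_integral (hint f) (Eventually.of_forall fun _ => by positivity))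
    (by positivity)

theorem rpow_integral_le_coeffSeminorm_add_compl {S : Set Y} (hS : MeasurableSet S) (f : X) :
    (∫ y, ‖fstar y f‖ ^ p ∂μ) ^ (1 / p) ≤
      coeffSeminorm hp hint S f + coeffSeminorm hp hint Sᶜ f := by
  rw [← integral_add_compl hS (hint f)]
  exact Real.rpow_add_le_add_rpow (integral_nonneg fun _ => by positivity)
    (integral_nonneg fun _ => by positivity) (by positivity)
    (div_le_one_of_le₀ hp (by positivity))

theorem tendsto_coeffSeminorm_compl_atTop {A : ℕ → Set Y} (hA : ∀ n, MeasurableSet (A n))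
    (hmono : Monotone A) (hunion : ⋃ n, A n = Set.univ) (f : X) :
    Tendsto (fun n => coeffSeminorm hp hint (A n)ᶜ f) atTop (𝓝 0) := by
  have htail := tendsto_setIntegral_of_antitone (μ := μ) (fun n => (hA n).compl)
    (fun m n hmn => Set.compl_subset_compl.2 (hmono hmn)) ⟨0, (hint f).integrableOn⟩
  rw [← Set.compl_iUnion, hunion, Set.compl_univ, Measure.restrict_empty,
    integral_zero_measure] at htail
  exact tendsto_coeffSeminorm_of_tendsto_integral hp hint htail

theorem tendsto_coeffSeminorm_sub_of_weakly_tendsto (hbdd : ∃ B, ∀ y, ‖fstar y‖ ≤ B)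
    {S : Set Y} (hS : μ S < ⊤) {v : ℕ → X} {x : X} {M : ℝ} (hv : ∀ k, ‖v k‖ ≤ M)
    (hvx : ∀ g : StrongDual 𝕜 X, Tendsto (fun k => g (v k)) atTop (𝓝 (g x))) :
    Tendsto (fun k => coeffSeminorm hp hint S (v k - x)) atTop (𝓝 0) := by
  obtain ⟨B, hB⟩ := hbdd
  have hp0 : 0 < p := by linarith
  have hpointwise (y : Y) : Tendsto (fun k => ‖fstar y (v k - x)‖ ^ p) atTop (𝓝 0) := by
    have := ((hvx (fstar y)).sub_const (fstar y x)).norm.rpow_const (Or.inr hp0.le)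
    simpa [Real.zero_rpow hp0.ne'] using this
  have hdom (k : ℕ) (y : Y) : ‖‖fstar y (v k - x)‖ ^ p‖ ≤ (B * (M + ‖x‖)) ^ p := by
    rw [Real.norm_of_nonneg (by positivity)]
    refine Real.rpow_le_rpow (norm_nonneg _) ?_ hp0.le
    calc ‖fstar y (v k - x)‖ ≤ ‖fstar y‖ * ‖v k - x‖ := (fstar y).le_opNorm _
      _ ≤ B * (M + ‖x‖) := mul_le_mul (hB y) ((norm_sub_le _ _).trans (by linarith [hv k]))
          (norm_nonneg _) ((norm_nonneg _).trans (hB y))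
  refine tendsto_coeffSeminorm_of_tendsto_integral hp hint (S := fun _ => S) ?_
  simpa using tendsto_integral_of_dominated_convergence _
    (fun k => (hint (v k - x)).aestronglyMeasurable.restrict) (integrableOn_const hS.ne)
    (fun k => Eventually.of_forall (hdom k)) (Eventually.of_forall hpointwise)

end CoeffSeminorm

theorem banach_frame_riesz_kolmogorov_general
    {X : Type*} [NormedAddCommGroup X] [NormedSpace ℂ X] [CompleteSpace X]
    (hrefl : Function.Surjective (NormedSpace.inclusionInDoubleDual ℂ X))
    {Y : Type*} [MeasurableSpace Y] (μ : Measure Y)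
    (p : ℝ) (hp : 1 ≤ p)
    (fstar : Y → (X →L[ℂ] ℂ))
    (hbdd : ∃ B : ℝ, ∀ y, ‖fstar y‖ ≤ B)
    (hint : ∀ f : X, Integrable (fun y => ‖fstar y f‖ ^ p) μ)
    (c C : ℝ) (hc : 0 < c)
    (hframe : ∀ f : X,
      c * ‖f‖ ≤ (∫ y, ‖fstar y f‖ ^ p ∂μ) ^ (1 / p) ∧
      (∫ y, ‖fstar y f‖ ^ p ∂μ) ^ (1 / p) ≤ C * ‖f‖)
    (A : ℕ → Set Y) (hAmeas : ∀ n, MeasurableSet (A n)) (hmono : Monotone A)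
    (hunion : (⋃ n, A n) = Set.univ) (hfin : ∀ n, μ (A n) < ⊤)
    (F : Set X) (hF : Bornology.IsBounded F) :
    IsCompact (closure F) ↔
      ∀ ε > 0, ∃ N : ℕ, ∀ n ≥ N, ∀ f ∈ F,
        ∫ y in (A n)ᶜ, ‖fstar y f‖ ^ p ∂μ < ε := by
  let q : Set Y → AddGroupSeminorm X := coeffSeminorm hp hint
  constructor
  · intro hcpt ε hε
    obtain ⟨N, hN⟩ := eventually_atTop.1 <|
      (hcpt.totallyBounded.subset subset_closure).eventually_forall_lt_of_tendsto_zero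
        (q := fun n => q (A n)ᶜ) (fun n f => (coeffSeminorm_le hp hint _ f).trans (hframe f).2)
        (tendsto_coeffSeminorm_compl_atTop hp hint hAmeas hmono hunion)
        (Real.rpow_pos_of_pos hε (1 / p))
    exact ⟨N, fun n hn f hf => (coeffSeminorm_lt_rpow_iff hp hint hε.le).1 (hN n hn f hf)⟩
  · intro htails
    refine isCompact_closure_of_forall_exists_addGroupSeminorm hrefl hF hc fun ε hε => ?_
    obtain ⟨N, hN⟩ := htails ((ε / 2) ^ p) (by positivity)
    have htail : ∀ f ∈ F, q (A N)ᶜ f < ε / 2 := fun f hf => by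
      have := (coeffSeminorm_lt_rpow_iff hp hint (by positivity)).2 (hN N le_rfl f hf)
      rwa [one_div, Real.rpow_rpow_inv (by positivity) (by linarith)] at this
    refine ⟨q (A N), fun v x M hv hvx =>
      tendsto_coeffSeminorm_sub_of_weakly_tendsto hp hint hbdd (hfin N) hv hvx,
      fun f hf g hg => ?_⟩
    calc c * ‖f - g‖ ≤ (∫ y, ‖fstar y (f - g)‖ ^ p ∂μ) ^ (1 / p) := (hframe _).1
      _ ≤ q (A N) (f - g) + q (A N)ᶜ (f - g) :=
        rpow_integral_le_coeffSeminorm_add_compl hp hint (hAmeas N) _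
      _ ≤ q (A N) (f - g) + (q (A N)ᶜ f + q (A N)ᶜ g) :=
        add_le_add le_rfl (map_sub_le_add _ _ _)
      _ ≤ q (A N) (f - g) + ε := by linarith [htail f hf, htail g hg]

/-- Riesz–Kolmogorov criterion for a reflexive Banach space with a continuous frame with
respect to `L^p(Y, μ)`: a bounded set `F` is precompact iff the frame coefficients of its
elements have uniformly vanishing tails along an exhaustion by sets of finite measure. -/
theorem banach_frame_riesz_kolmogorov
    {X : Type*} [NormedAddCommGroup X] [NormedSpace ℂ X] [CompleteSpace X]
    (hrefl : Function.Surjective (NormedSpace.inclusionInDoubleDual ℂ X))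
    {Y : Type*} [MeasurableSpace Y] (μ : Measure Y)
    (p : ℝ) (hp : 1 ≤ p)
    (fstar : Y → (X →L[ℂ] ℂ))
    (hbdd : ∃ B : ℝ, ∀ y, ‖fstar y‖ ≤ B)
    (hint : ∀ f : X, Integrable (fun y => ‖fstar y f‖ ^ p) μ)
    (c C : ℝ) (hc : 0 < c) (hC : 0 < C)
    (hframe : ∀ f : X,
      c * ‖f‖ ≤ (∫ y, ‖fstar y f‖ ^ p ∂μ) ^ (1 / p) ∧
      (∫ y, ‖fstar y f‖ ^ p ∂μ) ^ (1 / p) ≤ C * ‖f‖)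
    (A : ℕ → Set Y) (hAmeas : ∀ n, MeasurableSet (A n)) (hmono : Monotone A)
    (hunion : (⋃ n, A n) = Set.univ) (hfin : ∀ n, μ (A n) < ⊤)
    (F : Set X) (hF : Bornology.IsBounded F) :
    IsCompact (closure F) ↔
      ∀ ε > 0, ∃ N : ℕ, ∀ n ≥ N, ∀ f ∈ F,
        ∫ y in (A n)ᶜ, ‖fstar y f‖ ^ p ∂μ < ε :=
  banach_frame_riesz_kolmogorov_general hrefl μ p hp fstar hbdd hint c C hc hframe A hAmeas hmono
    hunion hfin F hF
end

section
/- Let X be a reflexive Banach space and ({f_x},{f_x*}) a continuous frame with lower bound c > 0 and sup_x ‖f_x*‖ = B < ∞ over (X, μ). If (f_k) converges weakly to 0 in X with sup_k ‖f_k‖ ≤ A, F_N is measurable with μ(F_N) < ∞, and ∫_{X∖F_N} |⟨f_k, f_x*⟩|^p dμ < c^p ε/2 for all k, then ‖f_k‖^p < ε for all sufficiently large k. -/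
open MeasureTheory

/-- Banach frame version: if `(f k)` converges weakly to `0` in a reflexive Banach space
with a continuous frame (lower bound `c`, uniformly bounded functionals), is norm-bounded
by `A`, and the frame coefficients of all `f k` have tails `< c^p ε / 2` outside a set of
finite measure, then `‖f k‖^p < ε` for all large `k`. -/
theorem banach_norm_pow_eventually_lt_of_weak_null_and_small_tails
    {X : Type*} [NormedAddCommGroup X] [NormedSpace ℂ X] [CompleteSpace X]
    (hrefl : Function.Surjective (NormedSpace.inclusionInDoubleDual ℂ X))
    {Y : Type*} [MeasurableSpace Y] (μ : Measure Y)
    (p : ℝ) (hp : 1 ≤ p)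
    (fstar : Y → (X →L[ℂ] ℂ))
    (B : ℝ) (hB : ∀ y, ‖fstar y‖ ≤ B)
    (hint : ∀ f : X, Integrable (fun y => ‖fstar y f‖ ^ p) μ)
    (c : ℝ) (hc : 0 < c)
    (hlower : ∀ f : X, c * ‖f‖ ≤ (∫ y, ‖fstar y f‖ ^ p ∂μ) ^ (1 / p))
    (f : ℕ → X)
    (hweak : ∀ φ : X →L[ℂ] ℂ, Filter.Tendsto (fun k => φ (f k)) Filter.atTop (nhds 0))
    (A : ℝ) (hA : ∀ k, ‖f k‖ ≤ A)
    (ε : ℝ) (hε : 0 < ε)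
    (S : Set Y) (hSmeas : MeasurableSet S) (hSfin : μ S < ⊤)
    (htail : ∀ k, ∫ y in Sᶜ, ‖fstar y (f k)‖ ^ p ∂μ < c ^ p * ε / 2) :
    ∀ᶠ k in Filter.atTop, ‖f k‖ ^ p < ε := by
  have hp0 : 0 < p := lt_of_lt_of_le one_pos hp
  haveI := Fact.mk hSfin
  set g : ℕ → Y → ℝ := fun k y => ‖fstar y (f k)‖ ^ p with hg
  have hBA : ∀ k y, g k y ≤ (B * A) ^ p := by
    intro k y
    apply Real.rpow_le_rpow (norm_nonneg _) _ hp0.le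
    calc ‖fstar y (f k)‖ ≤ ‖fstar y‖ * ‖f k‖ := (fstar y).le_opNorm _
      _ ≤ B * A := mul_le_mul (hB y) (hA k) (norm_nonneg _)
          ((norm_nonneg (fstar y)).trans (hB y))
  have hlim : ∀ᵐ y ∂(μ.restrict S),
      Filter.Tendsto (fun k => g k y) Filter.atTop (nhds 0) := by
    filter_upwards with y
    have h1 : Filter.Tendsto (fun k => ‖fstar y (f k)‖) Filter.atTop (nhds 0) := by
      simpa using (hweak (fstar y)).norm
    have := h1.rpow_const (Or.inr hp0.le)
    simpa [Real.zero_rpow hp0.ne'] using this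
  have htendS : Filter.Tendsto (fun k => ∫ y in S, g k y ∂μ) Filter.atTop (nhds 0) := by
    have h := MeasureTheory.tendsto_integral_of_dominated_convergence
      (μ := μ.restrict S) (F := g) (f := fun _ => (0:ℝ)) (fun _ => (B*A)^p)
      (fun k => ((hint (f k)).aestronglyMeasurable.restrict))
      (integrable_const _) ?_ hlim
    · simpa using h
    · intro k
      filter_upwards with y
      rw [Real.norm_of_nonneg (Real.rpow_nonneg (norm_nonneg _) _)]
      exact hBA k y
  have hpos : (0:ℝ) < c ^ p * ε / 2 := by positivity
  filter_upwards [htendS.eventually_lt_const hpos] with k hk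
  have hI0 : 0 ≤ ∫ y, g k y ∂μ :=
    integral_nonneg fun y => Real.rpow_nonneg (norm_nonneg _) _
  have hle : c ^ p * ‖f k‖ ^ p ≤ ∫ y, g k y ∂μ := by
    have h2 := Real.rpow_le_rpow (by positivity) (hlower (f k)) hp0.le
    rw [← Real.rpow_mul hI0, one_div, inv_mul_cancel₀ hp0.ne', Real.rpow_one,
      Real.mul_rpow hc.le (norm_nonneg _)] at h2
    exact h2
  have hsplit : (∫ y, g k y ∂μ) = (∫ y in S, g k y ∂μ) + ∫ y in Sᶜ, g k y ∂μ :=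
    (integral_add_compl hSmeas (hint (f k))).symm
  have hlt : c ^ p * ‖f k‖ ^ p < c ^ p * ε := by
    calc c ^ p * ‖f k‖ ^ p ≤ ∫ y, g k y ∂μ := hle
      _ = (∫ y in S, g k y ∂μ) + ∫ y in Sᶜ, g k y ∂μ := hsplit
      _ < c ^ p * ε / 2 + c ^ p * ε / 2 := add_lt_add hk (htail k)
      _ = c ^ p * ε := by ring
  exact (mul_lt_mul_iff_right₀ (Real.rpow_pos_of_pos hc p)).mp hlt
end

section
/- Let H be a Hilbert space, (T_n) compact operators on H, and suppose: (i) ⟨T_n f − f, f⟩ → 0 for each f ∈ H, (ii) F ⊆ H is bounded and sup_{f∈F} |⟨T_n f − f, f⟩| → 0. Then every sequence in F that converges weakly in H converges in norm. -/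
open scoped InnerProductSpace
open Filter Topology

/-!
A compact operator `T` sends a bounded weakly convergent sequence `x j ⇀ z` to a norm convergent
one, so `⟪T (x j), x j⟫ → ⟪T z, z⟫`. Expanding `‖x j - z‖²` then shows that
`‖x j - z‖² + re ⟪T (x j) - x j, x j⟫ → re ⟪T z - z, z⟫`. Taking `T = T n` with `n` so large
that the quadratic form `⟪T n u - u, u⟫` is uniformly small on `F` and small at `f`, the
squared distance `‖g j - f‖²` is eventually small.
-/

def WeakTendsto (𝕜 : Type*) {E ι : Type*} [RCLike 𝕜] [NormedAddCommGroup E]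
    [InnerProductSpace 𝕜 E] (x : ι → E) (l : Filter ι) (z : E) : Prop :=
  ∀ v : E, Tendsto (fun j => ⟪x j, v⟫_𝕜) l (𝓝 ⟪z, v⟫_𝕜)

section

variable {𝕜 E F : Type*} [RCLike 𝕜]
  [NormedAddCommGroup E] [InnerProductSpace 𝕜 E] [NormedAddCommGroup F] [InnerProductSpace 𝕜 F]

namespace WeakTendsto

variable {ι : Type*} {l : Filter ι} {x : ι → E} {y z : E}

theorem eq_of_mapClusterPt (hx : WeakTendsto 𝕜 x l z) (hy : MapClusterPt y l x) : y = z :=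
  ext_inner_right 𝕜 fun v =>
    eq_of_nhds_neBot ((hy.continuousAt_comp (continuous_id.inner continuous_const).continuousAt
      (f := fun w => ⟪w, v⟫_𝕜)).clusterPt.mono (hx v)).neBot

theorem map [CompleteSpace E] [CompleteSpace F] (hx : WeakTendsto 𝕜 x l z) (T : E →L[𝕜] F) :
    WeakTendsto 𝕜 (fun j => T (x j)) l (T z) := fun v => by
  simpa only [← ContinuousLinearMap.adjoint_inner_right] using hx (ContinuousLinearMap.adjoint T v)

theorem tendsto_of_mem_compact {K : Set E} (hK : IsCompact K) (hxK : ∀ᶠ j in l, x j ∈ K)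
    (hx : WeakTendsto 𝕜 x l z) : Tendsto x l (𝓝 z) :=
  hK.tendsto_nhds_of_unique_mapClusterPt hxK fun _ _ hy => hx.eq_of_mapClusterPt hy

theorem tendsto_inner_of_tendsto {w : ι → E} {u : E} (hx : WeakTendsto 𝕜 x l z)
    (hbdd : Bornology.IsBounded (Set.range x)) (hw : Tendsto w l (𝓝 u)) :
    Tendsto (fun j => ⟪w j, x j⟫_𝕜) l (𝓝 ⟪u, z⟫_𝕜) := by
  obtain ⟨C, hC⟩ := isBounded_iff_forall_norm_le.1 hbdd
  have hsmall : Tendsto (fun j => ⟪w j - u, x j⟫_𝕜) l (𝓝 0) := by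
    refine squeeze_zero_norm (fun j => (norm_inner_le_norm _ _).trans
      (mul_le_mul_of_nonneg_left (hC _ (Set.mem_range_self j)) (norm_nonneg _))) ?_
    simpa using ((tendsto_iff_norm_sub_tendsto_zero.1 hw).mul_const C)
  have hfixed : Tendsto (fun j => ⟪u, x j⟫_𝕜) l (𝓝 ⟪u, z⟫_𝕜) := by
    simpa only [Function.comp_def, inner_conj_symm] using
      (RCLike.continuous_conj.tendsto _).comp (hx u)
  simpa only [inner_sub_left, sub_add_cancel, zero_add] using hsmall.add hfixed

end WeakTendsto

theorem IsCompactOperator.tendsto_of_weakTendsto [CompleteSpace E] [CompleteSpace F]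
    {T : E →L[𝕜] F} (hT : IsCompactOperator T) {ι : Type*} {l : Filter ι} {x : ι → E} {z : E}
    (hbdd : Bornology.IsBounded (Set.range x)) (hx : WeakTendsto 𝕜 x l z) :
    Tendsto (fun j => T (x j)) l (𝓝 (T z)) :=
  (hx.map T).tendsto_of_mem_compact (hT.isCompact_closure_image_of_bounded hbdd)
    (Eventually.of_forall fun j => subset_closure ⟨x j, Set.mem_range_self j, rfl⟩)

open RCLike in
theorem IsCompactOperator.tendsto_norm_sub_sq_add_re_inner [CompleteSpace E] {T : E →L[𝕜] E}
    (hT : IsCompactOperator T) {ι : Type*} {l : Filter ι} {x : ι → E} {z : E}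
    (hbdd : Bornology.IsBounded (Set.range x)) (hx : WeakTendsto 𝕜 x l z) :
    Tendsto (fun j => ‖x j - z‖ ^ 2 + re ⟪T (x j) - x j, x j⟫_𝕜) l
      (𝓝 (re ⟪T z - z, z⟫_𝕜)) := by
  have hquad : Tendsto (fun j => ⟪T (x j), x j⟫_𝕜) l (𝓝 ⟪T z, z⟫_𝕜) :=
    hx.tendsto_inner_of_tendsto hbdd (hT.tendsto_of_weakTendsto hbdd hx)
  have hlim := ((continuous_re.tendsto _).comp hquad).sub
    (((continuous_re.tendsto _).comp (hx z)).const_mul 2) |>.add_const (‖z‖ ^ 2)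
  convert hlim using 2 with j
  · simp only [Function.comp_apply, norm_sub_sq (𝕜 := 𝕜), inner_sub_left, map_sub,
      inner_self_eq_norm_sq]
    ring
  · simp only [inner_sub_left, map_sub, inner_self_eq_norm_sq]
    ring

end

theorem tendsto_zero_of_tendsto_add_of_uniform {ι κ : Type*} {p : Filter ι} [p.NeBot]
    {l : Filter κ} {u : κ → ℝ} {e : ι → κ → ℝ} {c : ι → ℝ} (hu : ∀ j, 0 ≤ u j)
    (hc : Tendsto c p (𝓝 0)) (he : ∀ ε > 0, ∀ᶠ n in p, ∀ j, |e n j| < ε)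
    (h : ∀ n, Tendsto (fun j => u j + e n j) l (𝓝 (c n))) : Tendsto u l (𝓝 0) := by
  refine tendsto_order.2 ⟨fun a ha => Eventually.of_forall fun j => ha.trans_le (hu j),
    fun ε hε => ?_⟩
  have hε3 : 0 < ε / 3 := by positivity
  obtain ⟨n, hen, hcn⟩ := ((he (ε / 3) hε3).and (hc.eventually (gt_mem_nhds hε3))).exists
  filter_upwards [(h n).eventually (gt_mem_nhds (lt_add_of_pos_right (c n) hε3))] with j hj
  linarith [(abs_lt.1 (hen j)).1]

/-- Key step in the reverse direction of the Hilbert-space Riesz–Kolmogorov criterion: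
if `(T n)` are compact operators with `⟪T n f - f, f⟫ → 0` for each `f`, `F` is bounded and
`sup_{f ∈ F} |⟪T n f - f, f⟫| → 0`, then every sequence in `F` that converges weakly
converges in norm. -/
theorem weak_to_norm_convergence_in_F
    {H : Type*} [NormedAddCommGroup H] [InnerProductSpace ℂ H] [CompleteSpace H]
    (T : ℕ → H →L[ℂ] H) (hT : ∀ n, IsCompactOperator (T n))
    (hconv : ∀ f : H,
      Filter.Tendsto (fun n => ⟪T n f - f, f⟫_ℂ) Filter.atTop (nhds 0))
    (F : Set H) (hF : Bornology.IsBounded F)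
    (huniform : ∀ ε > 0, ∃ N : ℕ, ∀ n ≥ N, ∀ f ∈ F, ‖⟪T n f - f, f⟫_ℂ‖ < ε) :
    ∀ (g : ℕ → H) (f : H), (∀ j, g j ∈ F) →
      (∀ h : H, Filter.Tendsto (fun j => ⟪g j, h⟫_ℂ) Filter.atTop (nhds ⟪f, h⟫_ℂ)) →
      Filter.Tendsto g Filter.atTop (nhds f) := by
  intro g f hgF hgweak
  have hbdd : Bornology.IsBounded (Set.range g) := hF.subset (Set.range_subset_iff.2 hgF)
  have hform_f : Tendsto (fun n => RCLike.re ⟪T n f - f, f⟫_ℂ) atTop (𝓝 0) := by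
    simpa only [map_zero, Function.comp_def] using (RCLike.continuous_re.tendsto 0).comp (hconv f)
  have hform_F : ∀ ε > 0, ∀ᶠ n in atTop, ∀ j, |RCLike.re ⟪T n (g j) - g j, g j⟫_ℂ| < ε :=
    fun ε hε => let ⟨N, hN⟩ := huniform ε hε
      eventually_atTop.2 ⟨N, fun n hn j => (RCLike.abs_re_le_norm _).trans_lt (hN n hn _ (hgF j))⟩
  have hsq : Tendsto (fun j => ‖g j - f‖ ^ 2) atTop (𝓝 0) :=
    tendsto_zero_of_tendsto_add_of_uniform (fun j => by positivity) hform_f hform_F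
      fun n => (hT n).tendsto_norm_sub_sq_add_re_inner hbdd hgweak
  rw [tendsto_iff_norm_sub_tendsto_zero]
  simpa [Real.sqrt_sq (norm_nonneg _)] using hsq.sqrt
end
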